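/- arXiv:1801.03004 — 2 statements merged into one kernel-verified Lean document; each statement's English description precedes it below -/
import Mathlib

section
/- Let (A_N) be a sequence of complex numbers such that lim_{N→∞} |A_N|^{1/N} = 0 and there exist N₀ ∈ ℕ and C > 0 with |A_N| ≤ C · ∑_{k=N+1}^∞ |A_k| for all N ≥ N₀ (where the series converges). Then there exists N₁ ∈ ℕ such that A_N = 0 for all N ≥ N₁. -/
/-!
Write `T N = ∑_{k > N} |A_k|`. The domination hypothesis gives `T (N - 1) = |A_N| + T N ≤ (1 + C) T N`,
so a nonzero tail can decay at most geometrically with ratio `1 / (1 + C)`. The root condition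
forces `|A_N| ≤ ε ^ N`, hence `T N ≤ ε ^ (N + 1) / (1 - ε)`, for every `ε > 0` and large `N`; taking
`ε < 1 / (1 + C)` shows that the tail vanishes from `N₀` on.
-/

open Filter Topology

noncomputable def tailSum (a : ℕ → ℝ) (N : ℕ) : ℝ := ∑' k, a (N + 1 + k)

section tailSum

variable {a : ℕ → ℝ}

lemma summable_tail (hs : Summable a) (N : ℕ) : Summable fun k => a (N + 1 + k) :=
  ((summable_nat_add_iff (N + 1)).2 hs).congr fun k => by rw [add_comm]

lemma tailSum_eq_add (hs : Summable a) (N : ℕ) :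
    tailSum a N = a (N + 1) + tailSum a (N + 1) := by
  rw [tailSum, (summable_tail hs N).tsum_eq_zero_add, tailSum]
  congr 1
  exact tsum_congr fun k => by rw [show N + 1 + (k + 1) = N + 1 + 1 + k by omega]

lemma le_tailSum (hs : Summable a) (ha : ∀ n, 0 ≤ a n) {N n : ℕ} (h : N < n) :
    a n ≤ tailSum a N := by
  have := (summable_tail hs N).le_tsum (n - N - 1) fun _ _ => ha _
  rwa [show N + 1 + (n - N - 1) = n by omega] at this

lemma summable_of_le_pow (ha : ∀ n, 0 ≤ a n) {ε : ℝ} (hε₀ : 0 ≤ ε) (hε₁ : ε < 1) {M : ℕ}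
    (hM : ∀ n ≥ M, a n ≤ ε ^ n) : Summable a := by
  refine (summable_nat_add_iff M).1 <| Summable.of_nonneg_of_le (fun _ => ha _)
    (fun k => hM (k + M) (by omega)) ?_
  exact (summable_nat_add_iff M).2 (summable_geometric_of_lt_one hε₀ hε₁)

lemma tailSum_le_of_le_pow (ha : ∀ n, 0 ≤ a n) {ε : ℝ} (hε₀ : 0 ≤ ε) (hε₁ : ε < 1) {M : ℕ}
    (hM : ∀ n ≥ M, a n ≤ ε ^ n) {N : ℕ} (hN : M ≤ N) :
    tailSum a N ≤ ε ^ (N + 1) / (1 - ε) := by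
  have hgeom : HasSum (fun k => ε ^ (N + 1 + k)) (ε ^ (N + 1) / (1 - ε)) := by
    simpa only [pow_add, div_eq_mul_inv] using
      (hasSum_geometric_of_lt_one hε₀ hε₁).mul_left (ε ^ (N + 1))
  exact hasSum_le (fun k => hM _ (by omega))
    (summable_tail (summable_of_le_pow ha hε₀ hε₁ hM) N).hasSum hgeom

lemma tailSum_le_pow_mul_tailSum (hs : Summable a) {C : ℝ} (hC : 0 ≤ C)
    {N₀ : ℕ} (htail : ∀ N ≥ N₀, a N ≤ C * tailSum a N) (m : ℕ) :
    tailSum a N₀ ≤ (1 + C) ^ m * tailSum a (N₀ + m) := by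
  induction m with
  | zero => simp
  | succ m ih =>
    have hstep : tailSum a (N₀ + m) ≤ (1 + C) * tailSum a (N₀ + m + 1) := by
      rw [tailSum_eq_add hs]
      linarith [htail (N₀ + m + 1) (by omega)]
    calc tailSum a N₀ ≤ (1 + C) ^ m * tailSum a (N₀ + m) := ih
      _ ≤ (1 + C) ^ m * ((1 + C) * tailSum a (N₀ + m + 1)) := by gcongr
      _ = (1 + C) ^ (m + 1) * tailSum a (N₀ + (m + 1)) := by rw [← add_assoc, pow_succ]; ring

end tailSum

lemma eventually_le_pow_of_tendsto_rpow {a : ℕ → ℝ} (ha : ∀ n, 0 ≤ a n)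
    (hroot : Tendsto (fun n : ℕ => a n ^ (1 / (n : ℝ))) atTop (𝓝 0)) {ε : ℝ} (hε : 0 < ε) :
    ∃ M, ∀ n ≥ M, a n ≤ ε ^ n := by
  refine eventually_atTop.1 ?_
  filter_upwards [hroot.eventually (gt_mem_nhds hε), eventually_ge_atTop 1] with n hlt hn
  rw [← Real.rpow_inv_natCast_pow (ha n) (by omega : n ≠ 0), ← one_div]
  exact pow_le_pow_left₀ (Real.rpow_nonneg (ha n) _) hlt.le n

theorem eq_zero_of_le_mul_tailSum {a : ℕ → ℝ} (ha : ∀ n, 0 ≤ a n)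
    (hroot : Tendsto (fun n : ℕ => a n ^ (1 / (n : ℝ))) atTop (𝓝 0))
    {N₀ : ℕ} {C : ℝ} (hC : 0 ≤ C) (htail : ∀ N ≥ N₀, a N ≤ C * tailSum a N) :
    ∀ n ≥ N₀, a n = 0 := by
  set ε := (2 + C)⁻¹
  have hε₀ : 0 < ε := by positivity
  have hε₁ : ε < 1 := inv_lt_one_of_one_lt₀ (by linarith)
  have hratio : (1 + C) * ε < 1 := by
    rw [← div_eq_mul_inv, div_lt_one (by positivity)]; linarith
  obtain ⟨M, hM⟩ := eventually_le_pow_of_tendsto_rpow ha hroot hε₀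
  have hs := summable_of_le_pow ha hε₀.le hε₁ hM
  have hlim : Tendsto (fun m : ℕ => ((1 + C) * ε) ^ m * (ε ^ (N₀ + 1) / (1 - ε))) atTop (𝓝 0) := by
    simpa using (tendsto_pow_atTop_nhds_zero_of_lt_one (by positivity) hratio).mul_const
      (ε ^ (N₀ + 1) / (1 - ε))
  have hT : tailSum a N₀ ≤ 0 := by
    refine ge_of_tendsto hlim ?_
    filter_upwards [eventually_ge_atTop M] with m hm
    calc tailSum a N₀ ≤ (1 + C) ^ m * tailSum a (N₀ + m) :=
          tailSum_le_pow_mul_tailSum hs hC htail m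
      _ ≤ (1 + C) ^ m * (ε ^ (N₀ + m + 1) / (1 - ε)) := by
          gcongr; exact tailSum_le_of_le_pow ha hε₀.le hε₁ hM (by omega)
      _ = ((1 + C) * ε) ^ m * (ε ^ (N₀ + 1) / (1 - ε)) := by rw [mul_pow]; ring
  intro n hn
  refine le_antisymm ?_ (ha n)
  rcases hn.eq_or_lt with rfl | hlt
  · exact (htail N₀ le_rfl).trans (mul_nonpos_of_nonneg_of_nonpos hC hT)
  · exact (le_tailSum hs ha hlt).trans hT

theorem stmt_0_general (A : ℕ → ℂ)
    (hroot : Tendsto (fun N : ℕ => ‖A N‖ ^ (1 / (N : ℝ))) atTop (nhds 0))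
    (N₀ : ℕ) (C : ℝ) (hC : 0 < C)
    (htail : ∀ N ≥ N₀, ‖A N‖ ≤ C * ∑' k : ℕ, ‖A (N + 1 + k)‖) :
    ∃ N₁ : ℕ, ∀ N ≥ N₁, A N = 0 :=
  ⟨N₀, fun N hN => norm_eq_zero.1 <|
    eq_zero_of_le_mul_tailSum (fun _ => norm_nonneg _) hroot hC.le htail N hN⟩

/-- Tail-domination lemma: if `|A_N|^{1/N} → 0` and each term is dominated by a
constant times the tail of the series of absolute values, then the sequence is
eventually zero. -/
theorem stmt_0 (A : ℕ → ℂ)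
    (hroot : Tendsto (fun N : ℕ => ‖A N‖ ^ (1 / (N : ℝ))) atTop (nhds 0))
    (hsum : Summable (fun k : ℕ => ‖A k‖))
    (N₀ : ℕ) (C : ℝ) (hC : 0 < C)
    (htail : ∀ N ≥ N₀, ‖A N‖ ≤ C * ∑' k : ℕ, ‖A (N + 1 + k)‖) :
    ∃ N₁ : ℕ, ∀ N ≥ N₁, A N = 0 :=
  stmt_0_general A hroot N₀ C hC htail
end

section
/- Let (q_n) be a sequence of polynomials of degree at most M, each normalized so that the sum of the absolute values of its coefficients equals 1: q_n(z) = ∑_{k=0}^M λ_{n,k} z^k with ∑_{k=0}^M |λ_{n,k}| = 1. Let Q be a monic polynomial of degree M and let λ_{n,M} be the leading coefficient of q_n. If limsup_{n→∞} ‖q_n − λ_{n,M} Q‖^{1/n} ≤ θ < 1, then liminf_{n→∞} |λ_{n,M}| > 0. -/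
open Filter Polynomial Topology

/-!
Write `λₙ` for the leading coefficient of `qₙ` and `aₙ = ‖qₙ - λₙ Q‖`. The root condition
makes `aₙ` eventually smaller than `rⁿ` for some `r < 1`, so `aₙ → 0`. On the other hand the
triangle inequality gives `1 = ‖qₙ‖ ≤ aₙ + |λₙ| ‖Q‖`, so eventually `|λₙ| ≥ 1 / (2 ‖Q‖)`, and
`‖Q‖ ≥ 1` since `Q` is monic of degree `M`.
-/

theorem isBoundedUnder_rpow_one_div_natCast {a : ℕ → ℝ} {C : ℝ} (ha : ∀ n, 0 ≤ a n)
    (hC : ∀ n, a n ≤ C) :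
    IsBoundedUnder (· ≤ ·) atTop (fun n : ℕ => a n ^ (1 / (n : ℝ))) := by
  refine isBoundedUnder_of ⟨max C 1, fun n => ?_⟩
  rcases le_or_gt (a n) 1 with h1 | h1
  · exact (Real.rpow_le_one (ha n) h1 (by positivity)).trans (le_max_right _ _)
  rcases Nat.eq_zero_or_pos n with rfl | hn
  · simp
  have hexp : 1 / (n : ℝ) ≤ 1 := by
    rw [div_le_one (by exact_mod_cast hn)]
    exact_mod_cast hn
  calc a n ^ (1 / (n : ℝ)) ≤ a n ^ (1 : ℝ) := Real.rpow_le_rpow_of_exponent_le h1.le hexp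
    _ = a n := Real.rpow_one _
    _ ≤ max C 1 := (hC n).trans (le_max_left _ _)

theorem tendsto_zero_of_limsup_rpow_one_div_natCast_lt_one {a : ℕ → ℝ} (ha : ∀ n, 0 ≤ a n)
    (hbdd : IsBoundedUnder (· ≤ ·) atTop (fun n : ℕ => a n ^ (1 / (n : ℝ))))
    (hlim : limsup (fun n : ℕ => a n ^ (1 / (n : ℝ))) atTop < 1) :
    Tendsto a atTop (𝓝 0) := by
  obtain ⟨r, hr, hr1⟩ := exists_between (max_lt hlim one_pos)
  have hroot : ∀ᶠ n : ℕ in atTop, a n ^ (1 / (n : ℝ)) < r :=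
    eventually_lt_of_limsup_lt ((le_max_left _ _).trans_lt hr) hbdd
  have hpow : ∀ᶠ n : ℕ in atTop, a n ≤ r ^ n := by
    filter_upwards [hroot, eventually_ne_atTop 0] with n hn hn0
    have := pow_lt_pow_left₀ hn (Real.rpow_nonneg (ha n) _) hn0
    rw [one_div, Real.rpow_inv_natCast_pow (ha n) hn0] at this
    exact this.le
  exact squeeze_zero' (Eventually.of_forall ha) hpow
    (tendsto_pow_atTop_nhds_zero_of_lt_one ((le_max_right _ _).trans hr.le) hr1)

namespace Polynomial

variable {R : Type*} [SeminormedRing R]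

/-- The norm `‖·‖` of the paper on polynomials of degree at most `M`. -/
def coeffNorm (M : ℕ) (p : R[X]) : ℝ :=
  ∑ k ∈ Finset.range (M + 1), ‖p.coeff k‖

theorem coeffNorm_nonneg (M : ℕ) (p : R[X]) : 0 ≤ coeffNorm M p :=
  Finset.sum_nonneg fun _ _ => norm_nonneg _

theorem norm_coeff_le_coeffNorm {M k : ℕ} (hk : k ≤ M) (p : R[X]) :
    ‖p.coeff k‖ ≤ coeffNorm M p :=
  Finset.single_le_sum (f := fun k => ‖p.coeff k‖) (fun _ _ => norm_nonneg _)
    (Finset.mem_range_succ_iff.mpr hk)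

theorem coeffNorm_add_le (M : ℕ) (p q : R[X]) :
    coeffNorm M (p + q) ≤ coeffNorm M p + coeffNorm M q := by
  rw [coeffNorm, coeffNorm, coeffNorm, ← Finset.sum_add_distrib]
  exact Finset.sum_le_sum fun k _ => by simpa only [coeff_add] using norm_add_le _ _

theorem coeffNorm_sub_le (M : ℕ) (p q : R[X]) :
    coeffNorm M (p - q) ≤ coeffNorm M p + coeffNorm M q := by
  rw [coeffNorm, coeffNorm, coeffNorm, ← Finset.sum_add_distrib]
  exact Finset.sum_le_sum fun k _ => by simpa only [coeff_sub] using norm_sub_le _ _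

theorem coeffNorm_C_mul_le (M : ℕ) (c : R) (p : R[X]) :
    coeffNorm M (C c * p) ≤ ‖c‖ * coeffNorm M p := by
  rw [coeffNorm, coeffNorm, Finset.mul_sum]
  exact Finset.sum_le_sum fun k _ => by simpa only [coeff_C_mul] using norm_mul_le _ _

theorem coeffNorm_sub_C_mul_le (M : ℕ) (p q : R[X]) (c : R) :
    coeffNorm M (p - C c * q) ≤ coeffNorm M p + ‖c‖ * coeffNorm M q :=
  (coeffNorm_sub_le _ _ _).trans (by gcongr; exact coeffNorm_C_mul_le _ _ _)

theorem coeffNorm_le_coeffNorm_sub_C_mul_add (M : ℕ) (p q : R[X]) (c : R) :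
    coeffNorm M p ≤ coeffNorm M (p - C c * q) + ‖c‖ * coeffNorm M q :=
  calc coeffNorm M p = coeffNorm M (p - C c * q + C c * q) := by rw [sub_add_cancel]
    _ ≤ coeffNorm M (p - C c * q) + ‖c‖ * coeffNorm M q :=
      (coeffNorm_add_le _ _ _).trans (by gcongr; exact coeffNorm_C_mul_le _ _ _)

theorem one_le_coeffNorm [NormOneClass R] {Q : R[X]} (hQ : Q.Monic) :
    1 ≤ coeffNorm Q.natDegree Q := by
  simpa only [hQ.coeff_natDegree, norm_one] using
    norm_coeff_le_coeffNorm (M := Q.natDegree) le_rfl Q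

end Polynomial

theorem stmt_5_general (M : ℕ) (q : ℕ → Polynomial ℂ)
    (hnorm : ∀ n, ∑ k ∈ Finset.range (M + 1), ‖(q n).coeff k‖ = 1)
    (Q : Polynomial ℂ) (hQmonic : Q.Monic) (hQdeg : Q.natDegree = M)
    (θ : ℝ) (hθ : θ < 1)
    (hlim : limsup (fun n : ℕ =>
        (∑ k ∈ Finset.range (M + 1),
          ‖(q n - C ((q n).coeff M) * Q).coeff k‖) ^ (1 / (n : ℝ))) atTop ≤ θ) :
    0 < liminf (fun n : ℕ => ‖(q n).coeff M‖) atTop := by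
  have hN : 1 ≤ coeffNorm M Q := hQdeg ▸ one_le_coeffNorm hQmonic
  set a : ℕ → ℝ := fun n => coeffNorm M (q n - C ((q n).coeff M) * Q)
  set N := coeffNorm M Q
  have hlead : ∀ n, ‖(q n).coeff M‖ ≤ 1 := fun n =>
    hnorm n ▸ norm_coeff_le_coeffNorm le_rfl (q n)
  have hsplit : ∀ n, 1 ≤ a n + ‖(q n).coeff M‖ * N := fun n =>
    hnorm n ▸ coeffNorm_le_coeffNorm_sub_C_mul_add M (q n) Q _
  have hbound : ∀ n, a n ≤ 1 + N := fun n =>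
    calc a n ≤ 1 + ‖(q n).coeff M‖ * N := hnorm n ▸ coeffNorm_sub_C_mul_le M (q n) Q _
      _ ≤ 1 + N := by gcongr; exact mul_le_of_le_one_left (by linarith) (hlead n)
  have ha0 : ∀ n, 0 ≤ a n := fun n => coeffNorm_nonneg _ _
  have hzero : Tendsto a atTop (𝓝 0) :=
    tendsto_zero_of_limsup_rpow_one_div_natCast_lt_one ha0
      (isBoundedUnder_rpow_one_div_natCast ha0 hbound) (hlim.trans_lt hθ)
  have hlow : ∀ᶠ n in atTop, 1 / (2 * N) ≤ ‖(q n).coeff M‖ := by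
    filter_upwards [hzero.eventually (ge_mem_nhds one_half_pos)] with n hn
    rw [div_le_iff₀ (by positivity)]
    linarith [hsplit n]
  exact (by positivity : (0 : ℝ) < 1 / (2 * N)).trans_le
    (le_liminf_of_le (isBoundedUnder_of ⟨1, hlead⟩).isCoboundedUnder_ge hlow)

/-- If the polynomials `q_n`, normalized so that the sum of absolute values of
their coefficients equals `1`, satisfy
`limsup ‖q_n - λ_{n,M} Q‖^{1/n} ≤ θ < 1` for a monic polynomial `Q` of degree `M`,
then the leading coefficients `λ_{n,M}` stay bounded away from `0`. -/
theorem stmt_5 (M : ℕ) (q : ℕ → Polynomial ℂ)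
    (hdeg : ∀ n, (q n).degree ≤ (M : WithBot ℕ))
    (hnorm : ∀ n, ∑ k ∈ Finset.range (M + 1), ‖(q n).coeff k‖ = 1)
    (Q : Polynomial ℂ) (hQmonic : Q.Monic) (hQdeg : Q.natDegree = M)
    (θ : ℝ) (hθ : θ < 1)
    (hlim : limsup (fun n : ℕ =>
        (∑ k ∈ Finset.range (M + 1),
          ‖(q n - C ((q n).coeff M) * Q).coeff k‖) ^ (1 / (n : ℝ))) atTop ≤ θ) :
    0 < liminf (fun n : ℕ => ‖(q n).coeff M‖) atTop :=
  stmt_5_general M q hnorm Q hQmonic hQdeg θ hθ hlim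
end
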